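/- DPLL implies Resolution with size bound: for every consistent valuation Γ, every CNF formula Δ, and every natural number n, if Γ ⊢ⁿ Δ is derivable in the sized DPLL proof system, then there exists m ≤ n such that Δ ⊢ᵣᵐ Γ̄ is derivable in the sized resolution proof system, where Γ̄ = {l̄ : l ∈ Γ} is the clause consisting of the opposites of the literals of Γ. -/
import Mathlib


/-- A literal: a propositional variable (ℕ) with a sign. -/
structure Lit where
  var : ℕ
  sign : Bool
deriving DecidableEq

/-- The opposite literal. -/
def Lit.neg (l : Lit) : Lit := ⟨l.var, !l.sign⟩

/-- A clause: a finite set of literals, read disjunctively. -/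
abbrev Clause := Finset Lit

/-- A CNF formula: a finite set of clauses, read conjunctively. -/
abbrev CNF := Finset Clause

/-- A valuation: a finite set of literals, read conjunctively. -/
abbrev Valu := Finset Lit

/-- A model: a boolean assignment to literals respecting negation. -/
def IsModel (M : Lit → Bool) : Prop := ∀ l : Lit, M l = true ↔ ¬ (M (Lit.neg l) = true)

/-- `M ⊨ Γ` for a valuation (set of literals) `Γ`. -/
def SatVal (M : Lit → Bool) (Γ : Valu) : Prop := ∀ l ∈ Γ, M l = true

/-- `M ⊨ Δ` for a CNF formula `Δ`. -/
def SatCNF (M : Lit → Bool) (Δ : CNF) : Prop := ∀ C ∈ Δ, ∃ l ∈ C, M l = true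

/-- A consistent valuation. -/
def Consistent (Γ : Valu) : Prop := ∀ l ∈ Γ, Lit.neg l ∉ Γ

/-- The DPLL derivability relation `Γ ⊢ Δ`. -/
inductive DPLL : Valu → CNF → Prop
  | conflict (Γ : Valu) (Δ : CNF) : (∅ : Clause) ∈ Δ → DPLL Γ Δ
  | unit (Γ : Valu) (Δ : CNF) (l : Lit) : ({l} : Clause) ∈ Δ →
      DPLL (insert l Γ) (Δ.erase {l}) → DPLL Γ Δ
  | elim (Γ : Valu) (Δ : CNF) (C : Clause) (l : Lit) : l ∈ Γ → l ∈ C → C ∈ Δ →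
      DPLL Γ (Δ.erase C) → DPLL Γ Δ
  | red (Γ : Valu) (Δ : CNF) (C : Clause) (l : Lit) : l ∈ Γ → Lit.neg l ∈ C → C ∈ Δ →
      DPLL Γ (insert (C.erase (Lit.neg l)) (Δ.erase C)) → DPLL Γ Δ
  | split (Γ : Valu) (Δ : CNF) (l : Lit) :
      DPLL (insert l Γ) Δ → DPLL (insert (Lit.neg l) Γ) Δ → DPLL Γ Δ

/-- The sized DPLL derivability relation `Γ ⊢ⁿ Δ`. -/
inductive DPLLn : Valu → ℕ → CNF → Prop
  | conflict (Γ : Valu) (Δ : CNF) : (∅ : Clause) ∈ Δ → DPLLn Γ 0 Δ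
  | unit (Γ : Valu) (Δ : CNF) (l : Lit) (n : ℕ) : ({l} : Clause) ∈ Δ →
      DPLLn (insert l Γ) n (Δ.erase {l}) → DPLLn Γ (n + 1) Δ
  | elim (Γ : Valu) (Δ : CNF) (C : Clause) (l : Lit) (n : ℕ) : l ∈ Γ → l ∈ C → C ∈ Δ →
      DPLLn Γ n (Δ.erase C) → DPLLn Γ (n + 1) Δ
  | red (Γ : Valu) (Δ : CNF) (C : Clause) (l : Lit) (n : ℕ) : l ∈ Γ → Lit.neg l ∈ C → C ∈ Δ →
      DPLLn Γ n (insert (C.erase (Lit.neg l)) (Δ.erase C)) → DPLLn Γ (n + 1) Δ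
  | split (Γ : Valu) (Δ : CNF) (l : Lit) (n m : ℕ) :
      DPLLn (insert l Γ) n Δ → DPLLn (insert (Lit.neg l) Γ) m Δ → DPLLn Γ (n + m + 1) Δ

/-- The sized resolution derivability relation `Δ ⊢ᵣⁿ C`. -/
inductive Res : CNF → ℕ → Clause → Prop
  | sub (Δ : CNF) (C₀ C : Clause) : C₀ ∈ Δ → C₀ ⊆ C → Res Δ 0 C
  | res (Δ : CNF) (C C' : Clause) (l : Lit) (n m : ℕ) :
      Res Δ n (insert l C) → Res Δ m (insert (Lit.neg l) C') → Res Δ (n + m + 1) (C ∪ C')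


lemma Lit.neg_neg (l : Lit) : l.neg.neg = l := by
  cases l; simp [Lit.neg]

lemma Lit.neg_ne (l : Lit) : Lit.neg l ≠ l := by
  cases l with
  | mk v s => simp [Lit.neg]

lemma consistent_insert {Γ : Valu} {l : Lit} (hΓ : Consistent Γ) (h : Lit.neg l ∉ Γ) :
    Consistent (insert l Γ) := by
  intro x hx
  simp only [Finset.mem_insert] at hx ⊢
  push_neg
  rcases hx with rfl | hx
  · exact ⟨Lit.neg_ne x, h⟩
  · refine ⟨fun he => ?_, hΓ x hx⟩
    apply h
    rw [← he, Lit.neg_neg]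
    exact hx

lemma res_mono {Δ₁ Δ₂ : CNF} {n : ℕ} {E F : Clause}
    (h : Res Δ₁ n E) (hsub : ∀ C ∈ Δ₁, ∃ C' ∈ Δ₂, C' ⊆ C ∪ F) :
    Res Δ₂ n (E ∪ F) := by
  induction h with
  | sub C₀ C h0 hC =>
      obtain ⟨C', hC', hs⟩ := hsub C₀ h0
      exact Res.sub _ _ _ hC' (hs.trans (Finset.union_subset_union hC (le_refl F)))
  | res C C' l n m h1 h2 ih1 ih2 =>
      have i1 := ih1
      have i2 := ih2
      rw [Finset.insert_union] at i1 i2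
      have hr := Res.res Δ₂ (C ∪ F) (C' ∪ F) l _ _ i1 i2
      have he : (C ∪ F) ∪ (C' ∪ F) = (C ∪ C') ∪ F := by
        ext x; simp only [Finset.mem_union]; tauto
      rwa [he] at hr

lemma res_weaken_clause {Δ : CNF} {n : ℕ} {E E' : Clause} (h : Res Δ n E) (hs : E ⊆ E') :
    Res Δ n E' := by
  have := res_mono (F := E') h (fun C hC => ⟨C, hC, Finset.subset_union_left⟩)
  rwa [Finset.union_eq_right.mpr hs] at this

lemma res_weaken_cnf {Δ Δ' : CNF} {n : ℕ} {E : Clause} (h : Res Δ n E) (hs : Δ ⊆ Δ') :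
    Res Δ' n E := by
  have := res_mono (F := ∅) h (fun C hC => ⟨C, hs hC, by simp⟩)
  simpa using this

/-- DPLL implies Resolution with size bound. -/
theorem dpll_to_resolution (Γ : Valu) (Δ : CNF) (n : ℕ)
    (hΓ : Consistent Γ) (h : DPLLn Γ n Δ) :
    ∃ m ≤ n, Res Δ m (Γ.image Lit.neg) := by
  induction h with
  | conflict Γ Δ h0 =>
      exact ⟨0, le_refl 0, Res.sub Δ ∅ _ h0 (Finset.empty_subset _)⟩
  | unit Γ Δ l n hl hd ih =>
      by_cases hneg : Lit.neg l ∈ Γ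
      · refine ⟨0, Nat.zero_le _, Res.sub Δ {l} _ hl ?_⟩
        intro x hx
        rw [Finset.mem_singleton] at hx
        subst hx
        exact Finset.mem_image.mpr ⟨Lit.neg x, hneg, Lit.neg_neg x⟩
      · obtain ⟨a, ha, hres⟩ := ih (consistent_insert hΓ hneg)
        rw [Finset.image_insert] at hres
        have hres' : Res Δ a (insert (Lit.neg l) (Γ.image Lit.neg)) :=
          res_weaken_cnf hres (Finset.erase_subset _ _)
        have h1 : Res Δ 0 (insert l (Γ.image Lit.neg)) :=
          Res.sub Δ {l} _ hl (by simp)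
        have hr := Res.res Δ (Γ.image Lit.neg) (Γ.image Lit.neg) l 0 a h1 hres'
        rw [Finset.union_self] at hr
        exact ⟨0 + a + 1, by omega, hr⟩
  | elim Γ Δ C l n hlΓ hlC hCΔ hd ih =>
      obtain ⟨a, ha, hres⟩ := ih hΓ
      exact ⟨a, by omega, res_weaken_cnf hres (Finset.erase_subset _ _)⟩
  | red Γ Δ C l n hlΓ hlC hCΔ hd ih =>
      obtain ⟨a, ha, hres⟩ := ih hΓ
      have hkey : ∀ D ∈ insert (C.erase (Lit.neg l)) (Δ.erase C),
          ∃ D' ∈ Δ, D' ⊆ D ∪ {Lit.neg l} := by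
        intro D hD
        rcases Finset.mem_insert.mp hD with rfl | hD
        · refine ⟨C, hCΔ, ?_⟩
          intro x hx
          by_cases hxe : x = Lit.neg l
          · simp [hxe]
          · exact Finset.mem_union_left _ (Finset.mem_erase.mpr ⟨hxe, hx⟩)
        · exact ⟨D, Finset.mem_of_mem_erase hD, Finset.subset_union_left⟩
      have hres' := res_mono (F := {Lit.neg l}) hres hkey
      have heq : (Γ.image Lit.neg) ∪ {Lit.neg l} = Γ.image Lit.neg := by
        apply Finset.union_eq_left.mpr
        intro x hx
        rw [Finset.mem_singleton] at hx
        subst hx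
        exact Finset.mem_image.mpr ⟨l, hlΓ, rfl⟩
      rw [heq] at hres'
      exact ⟨a, by omega, hres'⟩
  | split Γ Δ l n m h1 h2 ih1 ih2 =>
      by_cases hl : l ∈ Γ
      · obtain ⟨a, ha, hres⟩ := ih1 (by rwa [Finset.insert_eq_self.mpr hl])
        rw [Finset.insert_eq_self.mpr hl] at hres
        exact ⟨a, by omega, hres⟩
      · by_cases hnl : Lit.neg l ∈ Γ
        · obtain ⟨a, ha, hres⟩ := ih2 (by rwa [Finset.insert_eq_self.mpr hnl])
          rw [Finset.insert_eq_self.mpr hnl] at hres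
          exact ⟨a, by omega, hres⟩
        · obtain ⟨a, ha, r1⟩ := ih1 (consistent_insert hΓ hnl)
          obtain ⟨b, hb, r2⟩ := ih2 (consistent_insert hΓ (by rwa [Lit.neg_neg]))
          rw [Finset.image_insert] at r1 r2
          have hr := Res.res Δ (Γ.image Lit.neg) (Γ.image Lit.neg) (Lit.neg l) a b r1 r2
          rw [Finset.union_self] at hr
          exact ⟨a + b + 1, by omega, hr⟩
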